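/- arXiv:0909.1134 — 6 statements merged into one kernel-verified Lean document; each statement's English description precedes it below -/
import Mathlib

section
/- The h-vector of a pure (d-1)-dimensional shellable simplicial complex can be computed from any shelling: h_i equals the number of facets in the shelling whose restriction face has cardinality i, for i = 0, 1, ..., d. -/
/-!
Every face of a shellable complex lies in a unique "interval" `[R j, τ j]` of the face lattice:
the one of the first facet of the shelling containing it. Summing `(x - 1) ^ (d - #γ)` over
`[R j, τ j]` gives `x ^ (d - #R j)` by the binomial theorem, so regrouping the faces of `Δ` by
facet turns the `f`-polynomial into the restriction-size generating polynomial.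
-/

open Finset Polynomial

theorem Finset.sum_card_filter_eq_mul {ι κ M : Type*} [DecidableEq κ] [NonAssocSemiring M]
    {s : Finset ι} {t : Finset κ} {g : ι → κ} (h : ∀ i ∈ s, g i ∈ t) (f : κ → M) :
    ∑ j ∈ t, (#{i ∈ s | g i = j} : M) * f j = ∑ i ∈ s, f (g i) := by
  rw [← sum_fiberwise_of_maps_to' h]
  simp only [sum_const, nsmul_eq_mul]

theorem Finset.sum_Icc_pow_card_sub {V R : Type*} [DecidableEq V] [CommSemiring R]
    {s t : Finset V} (h : s ⊆ t) (a : R) :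
    ∑ u ∈ Icc s t, a ^ (#t - #u) = (a + 1) ^ (#t - #s) := by
  have hdisj : ∀ u ∈ (t \ s).powerset, Disjoint s u := fun u hu =>
    disjoint_of_subset_right (mem_powerset.1 hu) disjoint_sdiff
  have hinj : Set.InjOn (s ∪ ·) ((t \ s).powerset : Set (Finset V)) := fun u hu v hv huv => by
    rw [← union_sdiff_cancel_left (hdisj u hu), ← union_sdiff_cancel_left (hdisj v hv)]
    exact congrArg (· \ s) huv
  rw [Icc_eq_image_powerset h, sum_image hinj, ← card_sdiff_of_subset h, add_comm,
    ← sum_pow_mul_eq_add_pow, card_sdiff_of_subset h]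
  refine sum_congr rfl fun u hu => ?_
  rw [one_pow, one_mul, card_union_of_disjoint (hdisj u hu), Nat.sub_sub]

section Shelling

variable {V ι : Type*} [DecidableEq V] [LinearOrder ι] {τ R : ι → Finset V}

theorem pairwiseDisjoint_Icc_of_shelling
    (hshell : ∀ j, ∀ γ ⊆ τ j, (R j ⊆ γ ↔ ∀ k, k < j → ¬ γ ⊆ τ k)) (S : Set ι) :
    S.PairwiseDisjoint fun j => Icc (R j) (τ j) := by
  intro i _ j _ hij
  refine disjoint_left.2 fun γ hγi hγj => ?_
  rw [mem_Icc] at hγi hγj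
  rcases hij.lt_or_gt with hlt | hgt
  · exact (hshell j γ hγj.2).1 hγj.1 i hlt hγi.2
  · exact (hshell i γ hγi.2).1 hγi.1 j hgt hγj.2

theorem biUnion_Icc_eq_of_shelling [Fintype ι] {Δ : Finset (Finset V)}
    (hface : ∀ j, ∀ γ ⊆ τ j, γ ∈ Δ) (hcover : ∀ σ ∈ Δ, ∃ j, σ ⊆ τ j)
    (hshell : ∀ j, ∀ γ ⊆ τ j, (R j ⊆ γ ↔ ∀ k, k < j → ¬ γ ⊆ τ k)) :
    univ.biUnion (fun j => Icc (R j) (τ j)) = Δ := by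
  ext σ
  simp only [mem_biUnion, mem_univ, true_and, mem_Icc]
  refine ⟨fun ⟨j, _, hστ⟩ => hface j σ hστ, fun hσ => ?_⟩
  obtain ⟨j₀, hj₀⟩ := hcover σ hσ
  obtain ⟨j, hj, hmin⟩ := exists_min_image {j | σ ⊆ τ j} id ⟨j₀, mem_filter.2 ⟨mem_univ _, hj₀⟩⟩
  have hστ : σ ⊆ τ j := (mem_filter.1 hj).2
  refine ⟨j, (hshell j σ hστ).2 fun k hkj hσk => ?_, hστ⟩
  exact (hmin k (mem_filter.2 ⟨mem_univ _, hσk⟩)).not_gt hkj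

end Shelling

open Classical in
theorem stmt0_general {V : Type*} [DecidableEq V] (d s : ℕ)
    (Δ : Finset (Finset V))
    (hdc : ∀ σ ∈ Δ, ∀ ρ ⊆ σ, ρ ∈ Δ)
    (hpure : ∀ σ ∈ Δ, ∃ τ ∈ Δ, τ.card = d ∧ σ ⊆ τ)
    (τ : Fin s → Finset V)
    (hmem : ∀ j, τ j ∈ Δ ∧ (τ j).card = d)
    (hsurj : ∀ σ ∈ Δ, σ.card = d → ∃ j, τ j = σ)
    (R : Fin s → Finset V)
    (hR : ∀ j, R j = (τ j).filter (fun v => ∃ k, k < j ∧ (τ j).erase v ⊆ τ k))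
    (hshell : ∀ j, ∀ γ ⊆ τ j, (R j ⊆ γ ↔ ∀ k, k < j → ¬ γ ⊆ τ k)) :
    ∑ i ∈ Finset.range (d + 1),
        (C ((Δ.filter (fun σ => σ.card = i)).card : ℤ)) * (X - 1) ^ (d - i)
      = ∑ i ∈ Finset.range (d + 1),
        (C ((Finset.univ.filter (fun j : Fin s => (R j).card = i)).card : ℤ)) * X ^ (d - i) := by
  have hRτ : ∀ j, R j ⊆ τ j := fun j => hR j ▸ filter_subset _ _
  have hcover : ∀ σ ∈ Δ, ∃ j, σ ⊆ τ j := fun σ hσ => by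
    obtain ⟨t, ht, htd, hσt⟩ := hpure σ hσ
    obtain ⟨j, rfl⟩ := hsurj t ht htd
    exact ⟨j, hσt⟩
  have hσd : ∀ σ ∈ Δ, σ.card ∈ range (d + 1) := fun σ hσ => by
    obtain ⟨j, hj⟩ := hcover σ hσ
    exact mem_range_succ_iff.2 ((hmem j).2 ▸ card_le_card hj)
  have hRd : ∀ j ∈ (univ : Finset (Fin s)), (R j).card ∈ range (d + 1) := fun j _ =>
    mem_range_succ_iff.2 ((hmem j).2 ▸ card_le_card (hRτ j))
  simp only [map_natCast]
  rw [sum_card_filter_eq_mul hσd (fun i => ((X : ℤ[X]) - 1) ^ (d - i)),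
    sum_card_filter_eq_mul hRd (fun i => (X : ℤ[X]) ^ (d - i)),
    ← biUnion_Icc_eq_of_shelling (fun j γ hγ => hdc _ (hmem j).1 γ hγ) hcover hshell,
    sum_biUnion (pairwiseDisjoint_Icc_of_shelling hshell _)]
  refine sum_congr rfl fun j _ => ?_
  rw [← (hmem j).2, sum_Icc_pow_card_sub (hRτ j), sub_add_cancel]

open Classical in
/-- The h-vector of a pure `(d-1)`-dimensional shellable simplicial complex can be computed
from any shelling: `h i` equals the number of facets whose restriction face has cardinality
`i`.  The h-vector is encoded by the defining polynomial identity
`∑ hᵢ x^(d-i) = ∑ f_{i-1} (x-1)^(d-i)`. -/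
theorem stmt0 {V : Type*} [DecidableEq V] (d s : ℕ)
    (Δ : Finset (Finset V))
    (hdc : ∀ σ ∈ Δ, ∀ ρ ⊆ σ, ρ ∈ Δ)
    (hpure : ∀ σ ∈ Δ, ∃ τ ∈ Δ, τ.card = d ∧ σ ⊆ τ)
    (τ : Fin s → Finset V) (hinj : Function.Injective τ)
    (hmem : ∀ j, τ j ∈ Δ ∧ (τ j).card = d)
    (hsurj : ∀ σ ∈ Δ, σ.card = d → ∃ j, τ j = σ)
    (R : Fin s → Finset V)
    (hR : ∀ j, R j = (τ j).filter (fun v => ∃ k, k < j ∧ (τ j).erase v ⊆ τ k))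
    (hshell : ∀ j, ∀ γ ⊆ τ j, (R j ⊆ γ ↔ ∀ k, k < j → ¬ γ ⊆ τ k)) :
    ∑ i ∈ Finset.range (d + 1),
        (C ((Δ.filter (fun σ => σ.card = i)).card : ℤ)) * (X - 1) ^ (d - i)
      = ∑ i ∈ Finset.range (d + 1),
        (C ((Finset.univ.filter (fun j : Fin s => (R j).card = i)).card : ℤ)) * X ^ (d - i) :=
  stmt0_general d s Δ hdc hpure τ hmem hsurj R hR hshell
end

section
/- Listing the facets of Λ_d(V_1, ..., V_m, a) in reverse lexicographic order gives a shelling of Λ_d; moreover, for every facet τ, the restriction face R(τ) equals up(τ) ∪ tail(τ). -/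
open Finset

variable {V : Type*} [Fintype V] [LinearOrder V]

/-- Facets of `Λ_d(V₁,…,V_m,a)`: `d`-subsets meeting the `i`-th color class in at most `a i`
vertices.  The linear order `<` plays the role of the reverse of the listing order `≻`
(i.e. `v ≻ w ↔ v > w`). -/
def IsFacet (c : V → ℕ) (a : ℕ → ℕ) (m d : ℕ) (τ : Finset V) : Prop :=
  τ.card = d ∧ ∀ i ∈ Finset.range m, (τ.filter (fun v => c v = i)).card ≤ a i

/-- Reverse lexicographic order on equal-size subsets: `S ≻ T` iff the `≻`-least element of
the symmetric difference lies in `T`. -/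
def RevGT (S T : Finset V) : Prop :=
  ∃ v ∈ T, v ∉ S ∧ ∀ w, w < v → (w ∈ S ↔ w ∈ T)

/-- `up(τ)`: vertices of `τ` lying in a full color class strictly after its first gap. -/
def upF (c : V → ℕ) (a : ℕ → ℕ) (τ : Finset V) : Finset V :=
  τ.filter (fun v => (τ.filter (fun w => c w = c v)).card = a (c v) ∧
    ∃ g, c g = c v ∧ g ∉ τ ∧ v < g)

/-- `tail(τ)`: vertices of `τ` strictly after `Gap(τ)`, the first vertex lying neither in
`τ` nor in a full color class. -/
def tailF (c : V → ℕ) (a : ℕ → ℕ) (τ : Finset V) : Finset V :=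
  τ.filter (fun v => ∃ g, g ∉ τ ∧ (τ.filter (fun w => c w = c g)).card < a (c g) ∧ v < g)

/-!
Replacing a vertex `v ∈ τ` by a `≻`-larger vertex `g ∉ τ` of the same colour, or of a colour
that is not full in `τ`, gives a revlex-larger facet containing `τ - v`; the vertices of
`up(τ) ∪ tail(τ)` are exactly those admitting such a swap. Conversely, if `τ' ≻ τ` is any facet
and `u ∈ τ - τ'` is the `≻`-least vertex of `τ Δ τ'`, then `u ∈ up(τ) ∪ tail(τ)`: otherwise every
vertex of `τ' - τ` is `≻`-larger than `u` and lies in a colour class that is full in `τ` and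
differs from that of `u`, so `τ'` has at most as many vertices as `τ` of every colour and fewer
of the colour of `u`, contradicting `|τ'| = |τ|`.
-/

section Shelling

variable {c : V → ℕ} {a : ℕ → ℕ} {m d : ℕ} {τ τ' : Finset V}

omit [Fintype V] in
lemma IsFacet.insert_erase (hτ : IsFacet c a m d τ) {v g : V} (hv : v ∈ τ) (hg : g ∉ τ)
    (hroom : c g = c v ∨ #(τ.filter (c · = c g)) < a (c g)) :
    IsFacet c a m d (insert g (τ.erase v)) := by
  have hg' : g ∉ τ.erase v := fun h => hg (mem_of_mem_erase h)
  refine ⟨?_, fun i hi => ?_⟩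
  · rw [card_insert_of_notMem hg', card_erase_of_mem hv, hτ.1,
      Nat.sub_add_cancel (hτ.1 ▸ card_pos.mpr ⟨v, hv⟩)]
  have hle := hτ.2 i hi
  rw [filter_insert, filter_erase]
  split_ifs with hgi
  · subst hgi
    rcases hroom with hgv | hlt
    · have hvg : v ∈ τ.filter (c · = c g) := mem_filter.mpr ⟨hv, hgv.symm⟩
      rw [card_insert_of_notMem (by simp [hg]), card_erase_of_mem hvg]
      have := card_pos.mpr ⟨v, hvg⟩
      omega
    · exact (card_insert_le _ _).trans
        (Nat.succ_le_of_lt ((card_le_card (erase_subset _ _)).trans_lt hlt))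
  · exact (card_le_card (erase_subset _ _)).trans hle

omit [Fintype V] in
lemma revGT_insert_erase {v g : V} (hv : v ∈ τ) (hvg : v < g) :
    RevGT (insert g (τ.erase v)) τ := by
  refine ⟨v, hv, by simp [hvg.ne], fun w hw => ?_⟩
  simp [hw.ne, (hw.trans hvg).ne]

lemma exists_facet_revGT_of_mem_upF_union_tailF (hτ : IsFacet c a m d τ) {v : V}
    (hv : v ∈ upF c a τ ∪ tailF c a τ) :
    ∃ τ', IsFacet c a m d τ' ∧ RevGT τ' τ ∧ τ.erase v ⊆ τ' := by
  obtain ⟨hvτ, g, hg, hvg, hroom⟩ : v ∈ τ ∧ ∃ g, g ∉ τ ∧ v < g ∧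
      (c g = c v ∨ #(τ.filter (c · = c g)) < a (c g)) := by
    rcases mem_union.mp hv with h | h
    · obtain ⟨hvτ, -, g, hgv, hg, hvg⟩ := mem_filter.mp h
      exact ⟨hvτ, g, hg, hvg, Or.inl hgv⟩
    · obtain ⟨hvτ, g, hg, hlt, hvg⟩ := mem_filter.mp h
      exact ⟨hvτ, g, hg, hvg, Or.inr hlt⟩
  exact ⟨_, hτ.insert_erase hvτ hg hroom, revGT_insert_erase hvτ hvg, subset_insert _ _⟩

omit [Fintype V] in
lemma card_filter_color_le_of_forall_sdiff (hτ' : IsFacet c a m d τ') {i : ℕ} (hi : i < m)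
    (hfull : ∀ x ∈ τ' \ τ, c x = i → a i ≤ #(τ.filter (c · = i))) :
    #(τ'.filter (c · = i)) ≤ #(τ.filter (c · = i)) := by
  by_cases hB : ∃ x ∈ τ' \ τ, c x = i
  · obtain ⟨x, hx, hxi⟩ := hB
    exact (hτ'.2 i (mem_range.mpr hi)).trans (hfull x hx hxi)
  · refine card_le_card fun x hx => ?_
    obtain ⟨hxτ', hxi⟩ := mem_filter.mp hx
    exact mem_filter.mpr ⟨by_contra fun hxτ => hB ⟨x, mem_sdiff.mpr ⟨hxτ', hxτ⟩, hxi⟩, hxi⟩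

omit [Fintype V] in
lemma card_filter_color_lt {u : V} (hu : u ∈ τ) (hu' : u ∉ τ')
    (hcolor : ∀ x ∈ τ' \ τ, c x ≠ c u) :
    #(τ'.filter (c · = c u)) < #(τ.filter (c · = c u)) := by
  refine card_lt_card ⟨fun x hx => ?_, fun h => hu' (mem_filter.mp (h (by simp [hu]))).1⟩
  obtain ⟨hxτ', hxu⟩ := mem_filter.mp hx
  exact mem_filter.mpr ⟨by_contra fun hxτ => hcolor x (mem_sdiff.mpr ⟨hxτ', hxτ⟩) hxu, hxu⟩

lemma mem_upF_union_tailF_of_revGT (hc : ∀ v, c v < m) (hτ : IsFacet c a m d τ)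
    (hτ' : IsFacet c a m d τ') {u : V} (hu : u ∈ τ) (hu' : u ∉ τ')
    (hbelow : ∀ w < u, w ∈ τ' ↔ w ∈ τ) :
    u ∈ upF c a τ ∪ tailF c a τ := by
  by_contra hnot
  have hafter : ∀ x ∈ τ' \ τ, u < x := fun x hx => by
    obtain ⟨hxτ', hxτ⟩ := mem_sdiff.mp hx
    rcases lt_trichotomy x u with h | rfl | h
    · exact absurd ((hbelow x h).mp hxτ') hxτ
    · exact absurd hxτ' hu'
    · exact h
  have hfull : ∀ x ∈ τ' \ τ, a (c x) ≤ #(τ.filter (c · = c x)) := fun x hx =>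
    not_lt.mp fun hlt => hnot <| mem_union_right _ <|
      mem_filter.mpr ⟨hu, x, (mem_sdiff.mp hx).2, hlt, hafter x hx⟩
  have hcolor : ∀ x ∈ τ' \ τ, c x ≠ c u := fun x hx hxu => by
    have heq := (hτ.2 _ (mem_range.mpr (hc x))).antisymm (hfull x hx)
    rw [hxu] at heq
    exact hnot <| mem_union_left _ <|
      mem_filter.mpr ⟨hu, heq, x, hxu, (mem_sdiff.mp hx).2, hafter x hx⟩
  have hlt : #τ' < #τ := by
    rw [card_eq_sum_card_fiberwise (fun x _ => mem_range.mpr (hc x)),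
      card_eq_sum_card_fiberwise (t := range m) (fun x _ => mem_range.mpr (hc x))]
    refine sum_lt_sum (fun i hi => card_filter_color_le_of_forall_sdiff hτ' (mem_range.mp hi)
        fun x hx hxi => hxi ▸ hfull x hx) ⟨c u, mem_range.mpr (hc u), ?_⟩
    exact card_filter_color_lt hu hu' hcolor
  exact hlt.ne (hτ'.1.trans hτ.1.symm)

end Shelling

open Classical in
theorem stmt1_general (c : V → ℕ) (a : ℕ → ℕ) (m d : ℕ)
    (hc : ∀ v : V, c v < m) :
    ∀ τ : Finset V, IsFacet c a m d τ →
      (τ.filter (fun v => ∃ τ', IsFacet c a m d τ' ∧ RevGT τ' τ ∧ τ.erase v ⊆ τ')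
          = upF c a τ ∪ tailF c a τ) ∧
      (∀ γ ⊆ τ, (upF c a τ ∪ tailF c a τ ⊆ γ ↔
          ∀ τ', IsFacet c a m d τ' → RevGT τ' τ → ¬ γ ⊆ τ')) := by
  intro τ hτ
  refine ⟨ext fun v => ⟨fun hv => ?_, fun hv => ?_⟩, fun γ hγ => ⟨?_, ?_⟩⟩
  · obtain ⟨-, τ', hτ', ⟨u, hu, hu', hbelow⟩, hsub⟩ := mem_filter.mp hv
    obtain rfl : u = v := by_contra fun huv => hu' (hsub (mem_erase.mpr ⟨huv, hu⟩))
    exact mem_upF_union_tailF_of_revGT hc hτ hτ' hu hu' hbelow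
  · have hvτ : v ∈ τ := by
      rcases mem_union.mp hv with h | h <;> exact (mem_filter.mp h).1
    exact mem_filter.mpr ⟨hvτ, exists_facet_revGT_of_mem_upF_union_tailF hτ hv⟩
  · rintro hsub τ' hτ' ⟨u, hu, hu', hbelow⟩ hγτ'
    exact hu' (hγτ' (hsub (mem_upF_union_tailF_of_revGT hc hτ hτ' hu hu' hbelow)))
  · intro h v hv
    by_contra hvγ
    obtain ⟨τ', hτ', hrev, hsub⟩ := exists_facet_revGT_of_mem_upF_union_tailF hτ hv
    exact h τ' hτ' hrev fun x hx => hsub (mem_erase.mpr ⟨fun hxv => hvγ (hxv ▸ hx), hγ hx⟩)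

open Classical in
/-- Listing the facets of `Λ_d` in revlex order is a shelling, with restriction function
`R(τ) = up(τ) ∪ tail(τ)`. -/
theorem stmt1 (c : V → ℕ) (a : ℕ → ℕ) (m d : ℕ)
    (horder : ∀ v w : V, c v < c w → w < v)
    (hc : ∀ v : V, c v < m)
    (ha : ∀ i, i < m → 0 < a i ∧ a i ≤ (Finset.univ.filter (fun v : V => c v = i)).card)
    (hd1 : 1 ≤ d) (hd2 : d ≤ ∑ i ∈ Finset.range m, a i) :
    ∀ τ : Finset V, IsFacet c a m d τ →
      (τ.filter (fun v => ∃ τ', IsFacet c a m d τ' ∧ RevGT τ' τ ∧ τ.erase v ⊆ τ')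
          = upF c a τ ∪ tailF c a τ) ∧
      (∀ γ ⊆ τ, (upF c a τ ∪ tailF c a τ ⊆ γ ↔
          ∀ τ', IsFacet c a m d τ' → RevGT τ' τ → ¬ γ ⊆ τ')) :=
  stmt1_general c a m d hc
end

section
/- No facet τ' of Λ_d with τ' ≻ τ in reverse lexicographic order contains the set up(τ) ∪ tail(τ). -/
/-!
Let `v` be the least element of `τ ∆ τ'`, so `v ∈ τ \ τ'`. Every vertex of `τ' \ τ` lies above `v`,
and since `v ∉ tail(τ)` every vertex above `v` missing from `τ` has a full colour class in `τ`.
Hence `τ'` meets each colour class in at most as many vertices as `τ`; both have `d` vertices,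
so the counts agree. In the colour class of `v` this forces a vertex `g ∈ τ' \ τ` of the same
colour, `g > v`, and the class is full in `τ`: that is, `v ∈ up(τ)`.
-/

open Finset

variable {V : Type*} [Fintype V] [LinearOrder V]

lemma card_filter_eq_of_card_eq_of_forall_le {α ι : Type*} [DecidableEq ι] {s t : Finset α}
    {I : Finset ι} {f : α → ι} (hs : Set.MapsTo f s I) (ht : Set.MapsTo f t I)
    (hcard : #t = #s) (hle : ∀ i ∈ I, #{x ∈ t | f x = i} ≤ #{x ∈ s | f x = i}) :
    ∀ i ∈ I, #{x ∈ t | f x = i} = #{x ∈ s | f x = i} :=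
  (sum_eq_sum_iff_of_le hle).1 <| by
    rw [← card_eq_sum_card_fiberwise ht, ← card_eq_sum_card_fiberwise hs, hcard]

lemma exists_mem_notMem_of_card_le_of_mem_of_notMem {α : Type*} [DecidableEq α]
    {s t : Finset α} {v : α} (h : #s ≤ #t) (hvs : v ∈ s) (hvt : v ∉ t) : ∃ g ∈ t, g ∉ s := by
  obtain ⟨g, hgt, hgs⟩ := exists_mem_notMem_of_card_lt_card (s := s.erase v) (t := t)
    (by have := card_pos.2 ⟨v, hvs⟩; rw [card_erase_of_mem hvs]; omega)
  exact ⟨g, hgt, fun hg => hgs (mem_erase.2 ⟨fun hgv => hvt (hgv ▸ hgt), hg⟩)⟩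

lemma lt_of_mem_of_notMem_of_agree_below {α : Type*} [LinearOrder α] {S T : Finset α}
    {v g : α} (hvS : v ∉ S) (hagree : ∀ w < v, w ∈ S ↔ w ∈ T) (hgS : g ∈ S) (hgT : g ∉ T) :
    v < g := by
  rcases lt_trichotomy g v with h | rfl | h
  · exact absurd ((hagree g h).1 hgS) hgT
  · exact absurd hgS hvS
  · exact h

section

variable {α : Type*} [LinearOrder α] (c : α → ℕ) (a : ℕ → ℕ) {m d : ℕ} {τ τ' : Finset α}

lemma card_filter_eq_of_notMem_tailF [Fintype α] (hc : ∀ v, c v < m) (hτ : IsFacet c a m d τ)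
    {v g : α} (hvτ : v ∈ τ) (hv : v ∉ tailF c a τ) (hgτ : g ∉ τ) (hvg : v < g) :
    #{w ∈ τ | c w = c g} = a (c g) :=
  (hτ.2 (c g) (mem_range.2 (hc g))).antisymm <| not_lt.1 fun hlt =>
    hv (mem_filter.2 ⟨hvτ, g, hgτ, hlt, hvg⟩)

lemma card_filter_le_of_forall_full (hc : ∀ v, c v < m) (hτ' : IsFacet c a m d τ')
    (hfull : ∀ g ∈ τ', g ∉ τ → #{w ∈ τ | c w = c g} = a (c g)) (i : ℕ) :
    #{w ∈ τ' | c w = i} ≤ #{w ∈ τ | c w = i} := by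
  by_cases hsub : {w ∈ τ' | c w = i} ⊆ {w ∈ τ | c w = i}
  · exact card_le_card hsub
  obtain ⟨g, hg', hg⟩ := not_subset.1 hsub
  rw [mem_filter] at hg' hg
  obtain ⟨hgτ', rfl⟩ := hg'
  rw [hfull g hgτ' fun hgτ => hg ⟨hgτ, rfl⟩]
  exact hτ'.2 (c g) (mem_range.2 (hc g))

end

theorem stmt3_general (c : V → ℕ) (a : ℕ → ℕ) (m d : ℕ)
    (hc : ∀ v : V, c v < m) :
    ∀ τ τ' : Finset V, IsFacet c a m d τ → IsFacet c a m d τ' → RevGT τ' τ →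
      ¬ (upF c a τ ∪ tailF c a τ ⊆ τ') := by
  rintro τ τ' hτ hτ' ⟨v, hvτ, hvτ', hagree⟩ hsub
  have hv_up : v ∉ upF c a τ := fun h => hvτ' (hsub (mem_union_left _ h))
  have hv_tail : v ∉ tailF c a τ := fun h => hvτ' (hsub (mem_union_right _ h))
  have hfull {g} (hgτ : g ∉ τ) (hvg : v < g) : #{w ∈ τ | c w = c g} = a (c g) :=
    card_filter_eq_of_notMem_tailF c a hc hτ hvτ hv_tail hgτ hvg
  have hgap {g} (hgτ' : g ∈ τ') (hgτ : g ∉ τ) : v < g :=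
    lt_of_mem_of_notMem_of_agree_below hvτ' hagree hgτ' hgτ
  have hclass := card_filter_eq_of_card_eq_of_forall_le (I := range m)
    (fun w _ => mem_range.2 (hc w)) (fun w _ => mem_range.2 (hc w)) (hτ'.1.trans hτ.1.symm)
    (fun i _ => card_filter_le_of_forall_full c a hc hτ'
      (fun g hgτ' hgτ => hfull hgτ (hgap hgτ' hgτ)) i)
    (c v) (mem_range.2 (hc v))
  obtain ⟨g, hg', hg⟩ := exists_mem_notMem_of_card_le_of_mem_of_notMem hclass.ge
    (mem_filter.2 ⟨hvτ, rfl⟩) fun h => hvτ' (mem_filter.1 h).1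
  rw [mem_filter] at hg' hg
  obtain ⟨hgτ', hcg⟩ := hg'
  have hgτ : g ∉ τ := fun h => hg ⟨h, hcg⟩
  have hvg := hgap hgτ' hgτ
  exact hv_up (mem_filter.2 ⟨hvτ, hcg ▸ hfull hgτ hvg, g, hcg, hgτ, hvg⟩)

/-- No facet `τ'` of `Λ_d` with `τ' ≻ τ` in revlex order contains `up(τ) ∪ tail(τ)`. -/
theorem stmt3 (c : V → ℕ) (a : ℕ → ℕ) (m d : ℕ)
    (horder : ∀ v w : V, c v < c w → w < v)
    (hc : ∀ v : V, c v < m)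
    (ha : ∀ i, i < m → 0 < a i ∧ a i ≤ (Finset.univ.filter (fun v : V => c v = i)).card)
    (hd1 : 1 ≤ d) (hd2 : d ≤ ∑ i ∈ Finset.range m, a i) :
    ∀ τ τ' : Finset V, IsFacet c a m d τ → IsFacet c a m d τ' → RevGT τ' τ →
      ¬ (upF c a τ ∪ tailF c a τ ⊆ τ') :=
  stmt3_general c a m d hc
end

section
/- With φ as above, if τ and τ' are a-subsets of V with τ' ≻ τ in revlex order and deg(φ(τ')) ≤ deg(φ(τ)), then there exists a divisor μ'' of φ(τ) with deg(μ'') = deg(φ(τ')) and φ(τ') ⪰ μ'' in the revlex order on monomials. -/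
/-!
Let `v` be the largest element of the symmetric difference of `τ` and `τ'`, so `v ∈ τ`,
`v ∉ τ'`, and the two sets agree above `v`. The variable that `φ` attaches to `u ∈ τ` is indexed
by the number `g_τ(u)` of gaps of `τ` below `u`. Since `|τ| = |τ'|`, the elements above `v` have
the same gap counts in both sets, so they contribute a common factor `C` to `φ(τ)` and `φ(τ')`.
As `g_τ` is monotone, the part of `φ(τ)` coming from elements `≤ v` has top variable index
`D = g_τ(v)`, while every variable in the corresponding part of `φ(τ')` has index at most
`g_τ'(v) = D - 1`. A divisor of `φ(τ)` made of `x_D`, further variables of the lower part and `C`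
therefore lies below `φ(τ')` in revlex, the comparison being decided at `x_D`.
-/

open Finset

/-- The map `φ` (0-based encoding of the ordered set `V = {v_1 ≻ v_2 ≻ ⋯}`; the produced
multiset consists of 1-based variable indices, where `x_1 ≻ x_2 ≻ ⋯`). -/
def phiMap (τ : Finset ℕ) : Multiset ℕ :=
  ↑(((τ.sort (· ≤ ·)).zipIdx.map (fun p => p.1 - p.2)).filter (fun x => x ≠ 0))

/-- Revlex order on equal-size subsets (in the index encoding, a smaller index means an
`≻`-larger element, so the `≻`-least element of the symmetric difference is the one with the
largest index): `S ≻ T` iff that element lies in `T`. -/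
def RevGTN (S T : Finset ℕ) : Prop :=
  ∃ v ∈ T, v ∉ S ∧ ∀ w, v < w → (w ∈ S ↔ w ∈ T)

/-- Revlex order on equal-degree monomials (multisets of variable indices): `μ ≻ ν` iff at
the `≻`-least variable where they differ (largest index), `μ` has the smaller exponent. -/
def MonRevGT (μ ν : Multiset ℕ) : Prop :=
  ∃ x, μ.count x < ν.count x ∧ ∀ y, x < y → μ.count y = ν.count y

/-- `φ` sends the element `u` of `τ` at sorted position `i` to `x_{u - i}` (with `x_0 = 1`), and
`u - i` is the number of elements of `V` before `u` that are missing from `τ`. -/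
def gapsBelow (τ : Finset ℕ) (u : ℕ) : ℕ := #(range u \ τ)

def phiPart (τ s : Finset ℕ) : Multiset ℕ := (s.val.map (gapsBelow τ)).filter (· ≠ 0)

section gapsBelow

variable {τ τ' : Finset ℕ} {u v : ℕ}

theorem gapsBelow_mono (τ : Finset ℕ) : Monotone (gapsBelow τ) :=
  fun _ _ h => card_le_card (sdiff_subset_sdiff (range_subset_range.2 h) le_rfl)

theorem gapsBelow_succ_of_mem (h : u ∈ τ) : gapsBelow τ (u + 1) = gapsBelow τ u := by
  rw [gapsBelow, range_add_one, insert_sdiff_of_mem _ h, gapsBelow]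

theorem gapsBelow_succ_of_notMem (h : u ∉ τ) : gapsBelow τ (u + 1) = gapsBelow τ u + 1 := by
  rw [gapsBelow, range_add_one, insert_sdiff_of_notMem _ h, card_insert_of_notMem (by simp),
    gapsBelow]

theorem gapsBelow_add_card (τ : Finset ℕ) (u : ℕ) :
    gapsBelow τ u + #τ = u + #(τ \ range u) := by
  have h₁ := card_sdiff_add_card_inter (range u) τ
  have h₂ := card_sdiff_add_card_inter τ (range u)
  rw [card_range] at h₁
  rw [inter_comm] at h₂
  unfold gapsBelow
  omega

theorem gapsBelow_eq_of_agree_above (hcard : #τ = #τ')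
    (hagree : ∀ w, v < w → (w ∈ τ ↔ w ∈ τ')) (hu : v < u) : gapsBelow τ u = gapsBelow τ' u := by
  have htail : τ \ range u = τ' \ range u := by
    ext w
    simp only [mem_sdiff, mem_range, not_lt]
    exact ⟨fun h => ⟨(hagree w (by omega)).1 h.1, h.2⟩,
      fun h => ⟨(hagree w (by omega)).2 h.1, h.2⟩⟩
  have := gapsBelow_add_card τ u
  have := gapsBelow_add_card τ' u
  rw [htail] at *
  omega

theorem gapsBelow_lt_of_agree_above (hcard : #τ = #τ') (hv : v ∈ τ) (hv' : v ∉ τ')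
    (hagree : ∀ w, v < w → (w ∈ τ ↔ w ∈ τ')) : gapsBelow τ' v < gapsBelow τ v :=
  calc gapsBelow τ' v < gapsBelow τ' (v + 1) := by rw [gapsBelow_succ_of_notMem hv']; omega
    _ = gapsBelow τ (v + 1) := (gapsBelow_eq_of_agree_above hcard hagree (by omega)).symm
    _ = gapsBelow τ v := gapsBelow_succ_of_mem hv

theorem gapsBelow_sort_getElem (τ : Finset ℕ) {i : ℕ} (hi : i < (τ.sort (· ≤ ·)).length) :
    gapsBelow τ (τ.sort (· ≤ ·))[i] = (τ.sort (· ≤ ·))[i] - i := by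
  have hf : (Set.ofPred (· ∈ τ)).Finite := τ.finite_toSet
  have hnth : Nat.nth (· ∈ τ) i = (τ.sort (· ≤ ·))[i] := by
    have e : hf.toFinset = τ := Finset.finite_toSet_toFinset τ
    simp only [Nat.nth_eq_getD_sort hf, e, List.getD_eq_getElem _ _ hi]
  have hcount : #(τ ∩ range (τ.sort (· ≤ ·))[i]) = i := by
    rw [← hnth, inter_comm, ← filter_mem_eq_inter, ← Nat.count_eq_card_filter_range]
    exact Nat.count_nth_of_lt_card_finite hf (by simpa using hi)
  rw [gapsBelow, card_sdiff, card_range, hcount]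

end gapsBelow

section phiPart

variable {τ τ' s : Finset ℕ} {v x : ℕ}

theorem phiMap_eq_phiPart (τ : Finset ℕ) : phiMap τ = phiPart τ τ := by
  rw [phiMap, phiPart, ← Finset.sort_eq τ (· ≤ ·), Multiset.map_coe, Multiset.filter_coe]
  congr 2
  refine List.ext_getElem (by simp) fun i _ _ => ?_
  simp only [List.getElem_map, List.getElem_zipIdx]
  rw [gapsBelow_sort_getElem]
  simp

theorem phiPart_eq_filter_le_add_filter_lt (τ s : Finset ℕ) (v : ℕ) :
    phiPart τ s = phiPart τ (s.filter (· ≤ v)) + phiPart τ (s.filter (v < ·)) := by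
  simp only [phiPart, filter_val, ← Multiset.filter_add, ← Multiset.map_add, not_le.symm,
    Multiset.filter_add_not]

theorem phiPart_filter_lt_eq_of_agree_above (hcard : #τ = #τ')
    (hagree : ∀ w, v < w → (w ∈ τ ↔ w ∈ τ')) :
    phiPart τ (τ.filter (v < ·)) = phiPart τ' (τ'.filter (v < ·)) := by
  have hs : τ.filter (v < ·) = τ'.filter (v < ·) := by
    ext w
    simp only [mem_filter]
    exact ⟨fun h => ⟨(hagree w h.2).1 h.1, h.2⟩, fun h => ⟨(hagree w h.2).2 h.1, h.2⟩⟩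
  rw [phiPart, phiPart, hs]
  congr 1
  refine Multiset.map_congr rfl fun u hu => ?_
  exact gapsBelow_eq_of_agree_above hcard hagree (mem_filter.1 hu).2

theorem le_gapsBelow_of_mem_phiPart (hs : ∀ u ∈ s, u ≤ v) (hx : x ∈ phiPart τ s) :
    x ≤ gapsBelow τ v := by
  obtain ⟨u, hu, rfl⟩ := Multiset.mem_map.1 (Multiset.mem_of_mem_filter hx)
  exact gapsBelow_mono τ (hs u hu)

end phiPart

section MonRevGT

variable {μ ν : Multiset ℕ} {D : ℕ}

theorem monRevGT_of_lt_of_le (hD : D ∈ ν) (hν : ∀ x ∈ ν, x ≤ D) (hμ : ∀ x ∈ μ, x < D) :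
    MonRevGT μ ν := by
  refine ⟨D, ?_, fun y hy => ?_⟩
  · rw [Multiset.count_eq_zero.2 fun h => (hμ D h).false]
    exact Multiset.count_pos.2 hD
  · rw [Multiset.count_eq_zero.2 fun h => by have := hμ y h; omega,
      Multiset.count_eq_zero.2 fun h => by have := hν y h; omega]

theorem MonRevGT.add_right (h : MonRevGT μ ν) (C : Multiset ℕ) : MonRevGT (μ + C) (ν + C) := by
  obtain ⟨x, hx, hy⟩ := h
  refine ⟨x, ?_, fun y hxy => ?_⟩ <;> simp only [Multiset.count_add]
  · omega
  · rw [hy y hxy]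

theorem Multiset.exists_le_card_eq {α : Type*} (ν : Multiset α) {k : ℕ}
    (hk : k ≤ Multiset.card ν) :
    ∃ ρ ≤ ν, Multiset.card ρ = k := by
  obtain ⟨ρ, hρ⟩ := Multiset.card_pos_iff_exists_mem.1 (by
    rw [Multiset.card_powersetCard]; exact Nat.choose_pos hk : 0 < Multiset.card (ν.powersetCard k))
  exact ⟨ρ, Multiset.mem_powersetCard.1 hρ⟩

theorem exists_le_card_eq_monRevGT (hcard : Multiset.card μ ≤ Multiset.card ν) (hμ0 : μ ≠ 0)
    (hD : D ∈ ν) (hν : ∀ x ∈ ν, x ≤ D) (hμ : ∀ x ∈ μ, x < D) :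
    ∃ ρ ≤ ν, Multiset.card ρ = Multiset.card μ ∧ MonRevGT μ ρ := by
  have hμpos := Multiset.card_pos.2 hμ0
  obtain ⟨ρ, hρ, hρcard⟩ := (ν.erase D).exists_le_card_eq (k := Multiset.card μ - 1) (by
    rw [Multiset.card_erase_of_mem hD, Nat.pred_eq_sub_one]; omega)
  have hle : D ::ₘ ρ ≤ ν := Multiset.cons_erase hD ▸ Multiset.cons_le_cons D hρ
  refine ⟨D ::ₘ ρ, hle, by rw [Multiset.card_cons]; omega, ?_⟩
  exact monRevGT_of_lt_of_le (Multiset.mem_cons_self D ρ)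
    (fun x hx => hν x (Multiset.mem_of_le hle hx)) hμ

end MonRevGT

theorem stmt5_general (a : ℕ)
    (τ τ' : Finset ℕ)
    (hca : τ.card = a) (hca' : τ'.card = a)
    (hgt : RevGTN τ' τ)
    (hdeg : Multiset.card (phiMap τ') ≤ Multiset.card (phiMap τ)) :
    ∃ μ'' : Multiset ℕ, μ'' ≤ phiMap τ ∧
      Multiset.card μ'' = Multiset.card (phiMap τ') ∧
      (phiMap τ' = μ'' ∨ MonRevGT (phiMap τ') μ'') := by
  obtain ⟨v, hvτ, hvτ', hagree⟩ := hgt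
  have hcard : #τ = #τ' := hca.trans hca'.symm
  have hagree' : ∀ w, v < w → (w ∈ τ ↔ w ∈ τ') := fun w hw => (hagree w hw).symm
  set L := phiPart τ (τ.filter (· ≤ v))
  set L' := phiPart τ' (τ'.filter (· ≤ v))
  set C := phiPart τ (τ.filter (v < ·))
  have hφ : phiMap τ = L + C := by
    rw [phiMap_eq_phiPart, phiPart_eq_filter_le_add_filter_lt τ τ v]
  have hφ' : phiMap τ' = L' + C := by
    rw [phiMap_eq_phiPart, phiPart_eq_filter_le_add_filter_lt τ' τ' v,
      ← phiPart_filter_lt_eq_of_agree_above hcard hagree']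
  rw [hφ, hφ'] at hdeg ⊢
  rcases eq_or_ne L' 0 with hL' | hL'
  · exact ⟨C, le_add_self, by simp [hL'], Or.inl (by simp [hL'])⟩
  have hlt := gapsBelow_lt_of_agree_above hcard hvτ hvτ' hagree'
  have hbound {σ : Finset ℕ} {x : ℕ} (hx : x ∈ phiPart σ (σ.filter (· ≤ v))) :
      x ≤ gapsBelow σ v :=
    le_gapsBelow_of_mem_phiPart (fun _ hu => (mem_filter.1 hu).2) hx
  have hD : gapsBelow τ v ∈ L :=
    Multiset.mem_filter.2 ⟨Multiset.mem_map_of_mem _ (mem_filter.2 ⟨hvτ, le_rfl⟩), by omega⟩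
  obtain ⟨ρ, hρ, hρcard, hρgt⟩ := exists_le_card_eq_monRevGT (by simpa using hdeg) hL' hD
    (fun _ => hbound) (fun _ hx => (hbound hx).trans_lt hlt)
  exact ⟨ρ + C, add_le_add_left hρ C, by simp [hρcard], Or.inr (hρgt.add_right C)⟩

/-- If `τ' ≻ τ` are `a`-subsets of `V` and `deg φ(τ') ≤ deg φ(τ)`, then `φ(τ)` has a divisor
`μ''` with `deg μ'' = deg φ(τ')` and `φ(τ') ⪰ μ''` in revlex. -/
theorem stmt5 (n a : ℕ) (ha : 1 ≤ a) (han : a ≤ n)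
    (τ τ' : Finset ℕ) (hτ : τ ⊆ Finset.range n) (hτ' : τ' ⊆ Finset.range n)
    (hca : τ.card = a) (hca' : τ'.card = a)
    (hgt : RevGTN τ' τ)
    (hdeg : Multiset.card (phiMap τ') ≤ Multiset.card (phiMap τ)) :
    ∃ μ'' : Multiset ℕ, μ'' ≤ phiMap τ ∧
      Multiset.card μ'' = Multiset.card (phiMap τ') ∧
      (phiMap τ' = μ'' ∨ MonRevGT (phiMap τ') μ'') :=
  stmt5_general a τ τ' hca hca' hgt hdeg
end

section
/- Let M be a multicomplex in S_d(X,(∞,a)) and 1 ≤ i ≤ m. For ν a monomial supported in X − (X_0 ∪ X_i) belonging to M(i) := {μ restricted to X−(X_0∪X_i) : μ ∈ M}, let M_ν = {monomials μ on X_0∪X_i : μν ∈ M}, and let M'_ν be the set consisting of the revlex-first F_j(M_ν) monomials of degree j in S_d(X_0∪X_i, a_i) for each j. Then C_i(M) := ∪_{ν ∈ M(i)} M'_ν · ν is a multicomplex. -/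
open Finset

variable {X : Type*} [Fintype X] [LinearOrder X]

def degM (μ : X →₀ ℕ) : ℕ := ∑ x, μ x

def degC (c : X → ℕ) (i : ℕ) (μ : X →₀ ℕ) : ℕ :=
  ∑ x ∈ Finset.univ.filter (fun x => c x = i), μ x

/-- Revlex comparison of the parts supported on `{x | P x}` (`≻` on variables is `>`). -/
def MonRevGTOn (P : X → Prop) (μ ν : X →₀ ℕ) : Prop :=
  ∃ x, P x ∧ μ x < ν x ∧ ∀ y, P y → y < x → μ y = ν y

def FVec (M : Finset (X →₀ ℕ)) (j : ℕ) : ℕ := (M.filter (fun μ => degM μ = j)).card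

/-- The part of a monomial supported outside `X₀ ∪ X_i`. -/
noncomputable def outp (c : X → ℕ) (i : ℕ) (μ : X →₀ ℕ) : X →₀ ℕ :=
  Finsupp.equivFunOnFinite.symm (fun x => if c x ≠ 0 ∧ c x ≠ i then μ x else 0)

/-- The part of a monomial supported in `X₀ ∪ X_i`. -/
noncomputable def innp (c : X → ℕ) (i : ℕ) (μ : X →₀ ℕ) : X →₀ ℕ :=
  Finsupp.equivFunOnFinite.symm (fun x => if c x = 0 ∨ c x = i then μ x else 0)

/-!
Write a divisor `ρ'` of `μ ν` (with `μ ∈ M'_ν`) as `μ' ν'`, split along `X₀ ∪ X_i`. Then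
`ν' ∣ ν` lies in `M(i)`, and `μ' ∈ M'_ν` by Mermin–Peeva. Since `M` is a multicomplex,
`M_ν · ν' ⊆ M`, so `M_ν ⊆ M_ν'` and `M'_ν` has at most as many monomials in each degree as
`M'_ν'`. Both are revlex initial segments, so if `μ'` were missing from `M'_ν'`, every monomial
of `M'_ν'` of the degree of `μ'` would be revlex-larger than `μ'` and lie in `M'_ν` too, which
together with `μ'` gives `M'_ν` strictly more monomials of that degree.
-/

section Split

variable (c : X → ℕ) (i : ℕ)

omit [LinearOrder X]

theorem innp_apply (μ : X →₀ ℕ) (x : X) :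
    innp c i μ x = if c x = 0 ∨ c x = i then μ x else 0 := rfl

theorem outp_apply (μ : X →₀ ℕ) (x : X) :
    outp c i μ x = if c x ≠ 0 ∧ c x ≠ i then μ x else 0 := rfl

theorem innp_add_outp (μ : X →₀ ℕ) : innp c i μ + outp c i μ = μ := by
  ext x
  simp only [Finsupp.add_apply, innp_apply, outp_apply]
  split_ifs <;> omega

theorem innp_add (μ ν : X →₀ ℕ) : innp c i (μ + ν) = innp c i μ + innp c i ν := by
  ext x
  simp only [Finsupp.add_apply, innp_apply]
  split_ifs <;> omega

theorem outp_add (μ ν : X →₀ ℕ) : outp c i (μ + ν) = outp c i μ + outp c i ν := by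
  ext x
  simp only [Finsupp.add_apply, outp_apply]
  split_ifs <;> omega

theorem innp_mono {μ ν : X →₀ ℕ} (h : μ ≤ ν) : innp c i μ ≤ innp c i ν := by
  intro x
  simp only [innp_apply]
  split_ifs
  exacts [h x, le_rfl]

theorem outp_mono {μ ν : X →₀ ℕ} (h : μ ≤ ν) : outp c i μ ≤ outp c i ν := by
  intro x
  simp only [outp_apply]
  split_ifs
  exacts [h x, le_rfl]

theorem outp_le (μ : X →₀ ℕ) : outp c i μ ≤ μ :=
  le_of_le_of_eq le_add_self (innp_add_outp c i μ)

theorem innp_outp (μ : X →₀ ℕ) : innp c i (outp c i μ) = 0 := by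
  ext x
  simp only [innp_apply, outp_apply, Finsupp.coe_zero, Pi.zero_apply]
  split_ifs <;> tauto

theorem outp_innp (μ : X →₀ ℕ) : outp c i (innp c i μ) = 0 := by
  ext x
  simp only [innp_apply, outp_apply, Finsupp.coe_zero, Pi.zero_apply]
  split_ifs <;> tauto

theorem innp_innp (μ : X →₀ ℕ) : innp c i (innp c i μ) = innp c i μ := by
  simpa [innp_add, innp_outp] using congr_arg (innp c i) (innp_add_outp c i μ)

theorem outp_outp (μ : X →₀ ℕ) : outp c i (outp c i μ) = outp c i μ := by
  simpa [outp_add, outp_innp] using congr_arg (outp c i) (innp_add_outp c i μ)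

theorem innp_eq_self {μ : X →₀ ℕ} (h : ∀ x, ¬ (c x = 0 ∨ c x = i) → μ x = 0) :
    innp c i μ = μ := by
  ext x
  rw [innp_apply]
  split_ifs with hx
  exacts [rfl, (h x hx).symm]

end Split

theorem image_innp_filter_outp_subset (c : X → ℕ) (i : ℕ) {M : Finset (X →₀ ℕ)}
    (hM : ∀ μ ∈ M, ∀ ν, ν ≤ μ → ν ∈ M) {ν ν' : X →₀ ℕ} (hle : ν' ≤ ν)
    (hν' : outp c i ν' = ν') :
    (M.filter (fun μ => outp c i μ = ν)).image (innp c i) ⊆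
      (M.filter (fun μ => outp c i μ = ν')).image (innp c i) := by
  intro τ hτ
  obtain ⟨σ, hσ, rfl⟩ := mem_image.1 hτ
  obtain ⟨hσM, rfl⟩ := mem_filter.1 hσ
  have hdvd : innp c i σ + ν' ≤ σ :=
    (add_le_add le_rfl hle).trans_eq (innp_add_outp c i σ)
  refine mem_image.2 ⟨innp c i σ + ν', mem_filter.2 ⟨hM σ hσM _ hdvd, ?_⟩, ?_⟩
  · rw [outp_add, outp_innp, hν', zero_add]
  · rw [innp_add, innp_innp, ← hν', innp_outp, add_zero]

omit [LinearOrder X] in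
theorem FVec_mono {s t : Finset (X →₀ ℕ)} (h : s ⊆ t) (j : ℕ) : FVec s j ≤ FVec t j :=
  card_le_card (filter_subset_filter _ h)

omit [LinearOrder X] in
theorem degM_mono {μ ν : X →₀ ℕ} (h : μ ≤ ν) : degM μ ≤ degM ν :=
  sum_le_sum fun x _ => h x

theorem monRevGTOn_or_monRevGTOn_of_ne {P : X → Prop} {μ ν : X →₀ ℕ}
    (hμ : ∀ x, ¬ P x → μ x = 0) (hν : ∀ x, ¬ P x → ν x = 0) (hne : μ ≠ ν) :
    MonRevGTOn P μ ν ∨ MonRevGTOn P ν μ := by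
  have hdiff : (univ.filter fun x => μ x ≠ ν x).Nonempty := by
    by_contra! h
    exact hne (Finsupp.ext fun x => by simpa using (filter_eq_empty_iff.1 h) (mem_univ x))
  obtain ⟨x, hx, hmin⟩ := (univ.filter fun x => μ x ≠ ν x).exists_min_image id hdiff
  have hxne : μ x ≠ ν x := (mem_filter.1 hx).2
  have hPx : P x := by
    by_contra hP
    exact hxne (by rw [hμ x hP, hν x hP])
  have hbelow : ∀ y, P y → y < x → μ y = ν y := fun y _ hy => by
    by_contra hyne
    exact (hmin y (mem_filter.2 ⟨mem_univ y, hyne⟩)).not_gt hy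
  rcases hxne.lt_or_gt with h | h
  · exact Or.inl ⟨x, hPx, h, hbelow⟩
  · exact Or.inr ⟨x, hPx, h, fun y hy hyx => (hbelow y hy hyx).symm⟩

def IsRevlexInitialIn (P : X → Prop) (A : (X →₀ ℕ) → Prop) (s : Finset (X →₀ ℕ)) : Prop :=
  (∀ σ ∈ s, A σ) ∧
    ∀ σ ∈ s, ∀ σ', A σ' → degM σ' = degM σ → MonRevGTOn P σ' σ → σ' ∈ s

theorem IsRevlexInitialIn.mem_of_FVec_le {P : X → Prop} {A B : (X →₀ ℕ) → Prop}
    {s t : Finset (X →₀ ℕ)} (hs : IsRevlexInitialIn P A s) (ht : IsRevlexInitialIn P B t)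
    (hBP : ∀ τ, B τ → ∀ x, ¬ P x → τ x = 0) {μ : X →₀ ℕ}
    (hBA : ∀ τ, B τ → degM τ = degM μ → A τ) (hμs : μ ∈ s) (hμB : B μ)
    (hF : FVec s (degM μ) ≤ FVec t (degM μ)) : μ ∈ t := by
  by_contra hμt
  have hsub : t.filter (degM · = degM μ) ⊆ s.filter (degM · = degM μ) := by
    intro τ hτ
    obtain ⟨hτt, hdeg⟩ := mem_filter.1 hτ
    have hτB := ht.1 τ hτt
    refine mem_filter.2 ⟨?_, hdeg⟩
    rcases monRevGTOn_or_monRevGTOn_of_ne (hBP μ hμB) (hBP τ hτB)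
      (fun h => hμt (h ▸ hτt)) with hgt | hgt
    · exact absurd (ht.2 τ hτt μ hμB hdeg.symm hgt) hμt
    · exact hs.2 μ hμs τ (hBA τ hτB hdeg) hdeg hgt
  have hssub : t.filter (degM · = degM μ) ⊂ s.filter (degM · = degM μ) :=
    (ssubset_iff_of_subset hsub).2
      ⟨μ, mem_filter.2 ⟨hμs, rfl⟩, fun h => hμt (mem_filter.1 h).1⟩
  exact (card_lt_card hssub).not_ge hF

open Classical in
/-- `Comp ν` encodes the compressed fiber `M'_ν`. -/
theorem stmt7_general (c : X → ℕ) (a : ℕ → ℕ) (d i : ℕ)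
    (M : Finset (X →₀ ℕ))
    (hMdc : ∀ μ ∈ M, ∀ ν : X →₀ ℕ, (∀ x, ν x ≤ μ x) → ν ∈ M)
    (Comp : (X →₀ ℕ) → Finset (X →₀ ℕ))
    -- each `Comp ν` consists of monomials of the ambient `S_d(X₀ ∪ X_i, a_i)` fitting `ν`
    (hComp1 : ∀ ν ∈ M.image (outp c i), ∀ μ ∈ Comp ν,
      (∀ x, ¬ (c x = 0 ∨ c x = i) → μ x = 0) ∧ degM μ + degM ν ≤ d ∧ degC c i μ ≤ a i)
    -- each `Comp ν` is a revlex initial segment in each degree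
    (hComp2 : ∀ ν ∈ M.image (outp c i), ∀ μ ∈ Comp ν, ∀ μ' : X →₀ ℕ,
      (∀ x, ¬ (c x = 0 ∨ c x = i) → μ' x = 0) → degM μ' = degM μ →
      degM μ' + degM ν ≤ d → degC c i μ' ≤ a i →
      MonRevGTOn (fun x => c x = 0 ∨ c x = i) μ' μ → μ' ∈ Comp ν)
    -- `Comp ν` has the same F-vector as the fiber `M_ν`
    (hComp3 : ∀ ν ∈ M.image (outp c i), ∀ j,
      FVec (Comp ν) j = FVec ((M.filter (fun μ => outp c i μ = ν)).image (innp c i)) j)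
    -- Mermin–Peeva: each compressed fiber is a multicomplex
    (hComp4 : ∀ ν ∈ M.image (outp c i), ∀ μ ∈ Comp ν, ∀ μ' : X →₀ ℕ,
      (∀ x, μ' x ≤ μ x) → μ' ∈ Comp ν) :
    ∀ ρ ∈ (M.image (outp c i)).biUnion (fun ν => (Comp ν).image (fun μ => μ + ν)),
      ∀ ρ' : X →₀ ℕ, (∀ x, ρ' x ≤ ρ x) →
        ρ' ∈ (M.image (outp c i)).biUnion (fun ν => (Comp ν).image (fun μ => μ + ν)) := by
  intro ρ hρ ρ' hle
  obtain ⟨ν, hν, μ, hμ, rfl⟩ : ∃ ν ∈ M.image (outp c i), ∃ μ ∈ Comp ν, μ + ν = ρ := by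
    simpa only [mem_biUnion, mem_image] using hρ
  obtain ⟨σ, hσM, rfl⟩ := mem_image.1 hν
  set ambient : (X →₀ ℕ) → (X →₀ ℕ) → Prop := fun ν τ =>
    (∀ x, ¬ (c x = 0 ∨ c x = i) → τ x = 0) ∧ degM τ + degM ν ≤ d ∧ degC c i τ ≤ a i
  have hseg : ∀ ν ∈ M.image (outp c i),
      IsRevlexInitialIn (fun x => c x = 0 ∨ c x = i) (ambient ν) (Comp ν) :=
    fun ν hν => ⟨hComp1 ν hν, fun τ hτ τ' ⟨hP, hd, ha⟩ hdeg hgt =>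
      hComp2 ν hν τ hτ τ' hP hdeg hd ha hgt⟩
  have hμ' : innp c i ρ' ≤ μ := (innp_mono c i hle).trans_eq <| by
    rw [innp_add, innp_eq_self c i (hComp1 _ hν μ hμ).1, innp_outp, add_zero]
  have hν' : outp c i ρ' ≤ outp c i σ := (outp_mono c i hle).trans_eq <| by
    rw [outp_add, ← innp_eq_self c i (hComp1 _ hν μ hμ).1, outp_innp, zero_add, outp_outp]
  have hν'mem : outp c i ρ' ∈ M.image (outp c i) :=
    mem_image.2 ⟨_, hMdc σ hσM _ ((hν'.trans (outp_le c i σ)) ·), outp_outp c i ρ'⟩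
  have hμ'ν : innp c i ρ' ∈ Comp (outp c i σ) := hComp4 _ hν μ hμ _ hμ'
  obtain ⟨hμ'P, hμ'd, hμ'a⟩ := hComp1 _ hν _ hμ'ν
  have hμ'ν' : innp c i ρ' ∈ Comp (outp c i ρ') := by
    refine (hseg _ hν).mem_of_FVec_le (hseg _ hν'mem) (fun τ hτ => hτ.1)
      (fun τ ⟨hP, _, ha⟩ hdeg => ⟨hP, hdeg ▸ hμ'd, ha⟩) hμ'ν
      ⟨hμ'P, (Nat.add_le_add_left (degM_mono hν') _).trans hμ'd, hμ'a⟩ ?_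
    rw [hComp3 _ hν, hComp3 _ hν'mem]
    exact FVec_mono (image_innp_filter_outp_subset c i hMdc hν' (outp_outp c i ρ')) _
  exact mem_biUnion.2 ⟨_, hν'mem, mem_image.2 ⟨_, hμ'ν', innp_add_outp c i ρ'⟩⟩

open Classical in
/-- `C_i(M) = ⋃_{ν ∈ M(i)} M'_ν · ν` is a multicomplex.  Here `Comp ν` plays the role of the
compressed fiber `M'_ν`: for each `ν ∈ M(i)` it is the revlex initial segment of
`S_d(X₀ ∪ X_i, a_i)` with the same F-vector as the fiber `M_ν`; by Mermin–Peeva it is itself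
divisibility-closed (hypothesis `hComp4`). -/
theorem stmt7 (c : X → ℕ) (a : ℕ → ℕ) (m d i : ℕ)
    (hm : ∀ x, c x ≤ m) (horder : ∀ x y : X, c x < c y → y < x)
    (hi1 : 1 ≤ i) (him : i ≤ m)
    (M : Finset (X →₀ ℕ))
    (hMS : ∀ μ ∈ M, degM μ ≤ d ∧ ∀ t, 1 ≤ t → t ≤ m → degC c t μ ≤ a t)
    (hMdc : ∀ μ ∈ M, ∀ ν : X →₀ ℕ, (∀ x, ν x ≤ μ x) → ν ∈ M)
    (Comp : (X →₀ ℕ) → Finset (X →₀ ℕ))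
    -- each `Comp ν` consists of monomials of the ambient `S_d(X₀ ∪ X_i, a_i)` fitting `ν`
    (hComp1 : ∀ ν ∈ M.image (outp c i), ∀ μ ∈ Comp ν,
      (∀ x, ¬ (c x = 0 ∨ c x = i) → μ x = 0) ∧ degM μ + degM ν ≤ d ∧ degC c i μ ≤ a i)
    -- each `Comp ν` is a revlex initial segment in each degree
    (hComp2 : ∀ ν ∈ M.image (outp c i), ∀ μ ∈ Comp ν, ∀ μ' : X →₀ ℕ,
      (∀ x, ¬ (c x = 0 ∨ c x = i) → μ' x = 0) → degM μ' = degM μ →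
      degM μ' + degM ν ≤ d → degC c i μ' ≤ a i →
      MonRevGTOn (fun x => c x = 0 ∨ c x = i) μ' μ → μ' ∈ Comp ν)
    -- `Comp ν` has the same F-vector as the fiber `M_ν`
    (hComp3 : ∀ ν ∈ M.image (outp c i), ∀ j,
      FVec (Comp ν) j = FVec ((M.filter (fun μ => outp c i μ = ν)).image (innp c i)) j)
    -- Mermin–Peeva: each compressed fiber is a multicomplex
    (hComp4 : ∀ ν ∈ M.image (outp c i), ∀ μ ∈ Comp ν, ∀ μ' : X →₀ ℕ,
      (∀ x, μ' x ≤ μ x) → μ' ∈ Comp ν) :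
    ∀ ρ ∈ (M.image (outp c i)).biUnion (fun ν => (Comp ν).image (fun μ => μ + ν)),
      ∀ ρ' : X →₀ ℕ, (∀ x, ρ' x ≤ ρ x) →
        ρ' ∈ (M.image (outp c i)).biUnion (fun ν => (Comp ν).image (fun μ => μ + ν)) :=
  stmt7_general c a d i M hMdc Comp hComp1 hComp2 hComp3 hComp4
end

section
/- For every facet τ of Λ_d, |V[τ]| − |τ ∩ V[τ]| = |X_0|, i.e., |V[τ]| − |τ ∩ V[τ]| = (∑_{i=1}^m a_i) − d. Consequently τ ∩ V[τ] lies in the domain of φ(V[τ], X_0). -/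
open Finset

/-- The "non-initial-segment" part `ρ(Y,W)` of the inverse map `ψ(Y,W)`, for an ambient
ordered set `W` whose `a`-subsets are matched with monomials. -/
def rhoMap (a : ℕ) (μ : Multiset ℕ) : Finset ℕ :=
  ((μ.sort (· ≤ ·)).zipIdx.map (fun p => p.1 + p.2 + (a - Multiset.card μ))).toFinset

/-- The one-block map `ψ(Y,W) = σ ∪ ρ`. -/
def psiMap (a : ℕ) (μ : Multiset ℕ) : Finset ℕ :=
  Finset.range (a - Multiset.card μ) ∪ rhoMap a μ

/-- `fl(τ,i)`: the revlex-first `k`-subset of `range N` containing `s` (add the earliest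
missing elements). -/
def fillF (s : Finset ℕ) (k N : ℕ) : Finset ℕ :=
  s ∪ ((((Finset.range N) \ s).sort (· ≤ ·)).take (k - s.card)).toFinset

/-- A facet of `Λ_d`, encoded blockwise: `τ i ⊆ V_i = range (n i)` with `|τ i| ≤ a i`
(for `i < m`) and `∑ |τ i| = d`. -/
def IsFacetT (m d : ℕ) (n a : ℕ → ℕ) (τ : ℕ → Finset ℕ) : Prop :=
  (∀ i, i < m → τ i ⊆ Finset.range (n i)) ∧ (∀ i, i < m → (τ i).card ≤ a i) ∧
  (∀ i, m ≤ i → τ i = ∅) ∧ (∑ i ∈ Finset.range m, (τ i).card) = d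

/-- `Φ_i(τ) = φ(V_i, X_i)(fl(τ,i))`. -/
def PhiBlock (a n : ℕ → ℕ) (τ : ℕ → Finset ℕ) (i : ℕ) : Multiset ℕ :=
  phiMap (fillF (τ i) (a i) (n i))

/-- `b i = a i - deg Φ_i(τ)`, the size of the block-`i` part of `V[τ]`. -/
def bfun (a n : ℕ → ℕ) (τ : ℕ → Finset ℕ) (i : ℕ) : ℕ :=
  a i - Multiset.card (PhiBlock a n τ i)

/-- Offsets identifying `V[τ] = ⋃ᵢ (first `b i` elements of `V_i`)` with `range (∑ b)`. -/
def offF (b : ℕ → ℕ) (i : ℕ) : ℕ := ∑ t ∈ Finset.range i, b t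

/-- `τ ∩ V[τ]`, as a subset of `range (∑ b)` via the order isomorphism. -/
def globF (m : ℕ) (b : ℕ → ℕ) (τ : ℕ → Finset ℕ) : Finset ℕ :=
  (Finset.range m).biUnion (fun i => ((τ i) ∩ Finset.range (b i)).image (fun j => offF b i + j))

/-- The full map `Φ`: index `0` gives the `X₀`-part `Φ₀(τ) = φ(V[τ],X₀)(τ ∩ V[τ])`, and index
`i+1 ≤ m` gives the `X_i`-part `Φ_i(τ)`. -/
def PhiMapT (m : ℕ) (a n : ℕ → ℕ) (τ : ℕ → Finset ℕ) : ℕ → Multiset ℕ :=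
  fun i => if i = 0 then phiMap (globF m (bfun a n τ) τ)
    else if i ≤ m then PhiBlock a n τ (i - 1) else 0

/-- Membership in `S_d(X,(∞,a))`, blockwise: `μ 0` is the `X₀`-part (`|X₀| = ∑ a - d`) and
`μ (i+1)` is the `X_i`-part (`|X_i| = n i - a i`, of degree at most `a i`). -/
def InST (m d : ℕ) (n a : ℕ → ℕ) (μ : ℕ → Multiset ℕ) : Prop :=
  (∑ i ∈ Finset.range (m + 1), Multiset.card (μ i)) ≤ d ∧
  (∀ i, i < m → Multiset.card (μ (i + 1)) ≤ a i) ∧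
  (∀ x ∈ μ 0, 1 ≤ x ∧ x ≤ (∑ i ∈ Finset.range m, a i) - d) ∧
  (∀ i, i < m → ∀ x ∈ μ (i + 1), 1 ≤ x ∧ x ≤ n i - a i) ∧
  (∀ i, m + 1 ≤ i → μ i = 0)

/-- The inverse map `Ψ`: `Ψ(μ) ∩ V_i = Ψ_i(μ) ∪ (block-i part of Ψ₀(μ))` where
`Ψ_i(μ) = ρ(X_i,V_i)(μ_{X_i})` and `Ψ₀(μ) = ψ(X₀,V[μ])(μ_{X₀}) ⊆ V[μ] ≅ range (∑ b)`. -/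
def PsiMapT (m d : ℕ) (n a : ℕ → ℕ) (μ : ℕ → Multiset ℕ) : ℕ → Finset ℕ :=
  fun i =>
    if i < m then
      rhoMap (a i) (μ (i + 1)) ∪
        ((psiMap ((∑ t ∈ Finset.range m, (a t - Multiset.card (μ (t + 1)))) -
              ((∑ t ∈ Finset.range m, a t) - d)) (μ 0) ∩
            Finset.Ico (offF (fun t => a t - Multiset.card (μ (t + 1))) i)
              (offF (fun t => a t - Multiset.card (μ (t + 1))) i +
                (a i - Multiset.card (μ (i + 1))))).image
          (fun j => j - offF (fun t => a t - Multiset.card (μ (t + 1))) i))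
    else ∅

/-!
In block `i` the filled set `fl(τ,i)` has `a_i` elements and its maximal initial segment has
length `b_i = a_i - deg Φ_i(τ)`. Since `fl` adds the earliest elements missing from `τ_i`, and
`b_i` is itself missing from `fl(τ,i)`, all added elements lie below `b_i`. Hence the first `b_i`
elements of `V_i` are exactly `τ_i ∩ V[τ]` together with the `a_i - |τ_i|` added ones, and
summing over the blocks gives `|V[τ]| = |τ ∩ V[τ]| + ∑ (a_i - |τ_i|) = |τ ∩ V[τ]| + ∑ a_i - d`.
-/

theorem List.Pairwise.rel_of_mem_take_of_notMem_take {α : Type*} {r : α → α → Prop} {M : List α}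
    (hM : M.Pairwise r) {n : ℕ} {x y : α} (hx : x ∈ M.take n) (hy : y ∈ M)
    (hyn : y ∉ M.take n) : r x y := by
  rw [← List.take_append_drop n M] at hM hy
  have hyd : y ∈ M.drop n := (List.mem_append.mp hy).resolve_left hyn
  exact (List.pairwise_append.mp hM).2.2 x hx y hyd

/-- Entries `x - idx` vanish exactly on the initial run `c, c+1, …, c+k-1` of the list. -/
theorem List.length_filter_sub_zipIdx_ne_zero {l : List ℕ} (hl : l.Pairwise (· < ·))
    {c k : ℕ} (hc : ∀ x ∈ l, c ≤ x) (hrun : ∀ j < k, c + j ∈ l) (hk : c + k ∉ l) :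
    (((l.zipIdx c).map (fun p => p.1 - p.2)).filter (fun x => x ≠ 0)).length
      = l.length - k := by
  induction l generalizing c k with
  | nil => simp
  | cons a l ih =>
    have hlt : ∀ x ∈ l, a < x := fun _ hx => List.rel_of_pairwise_cons hl hx
    have hca : c ≤ a := hc a List.mem_cons_self
    simp only [List.zipIdx_cons, List.map_cons, List.filter_cons, List.length_cons]
    by_cases hac : a = c
    · subst hac
      obtain ⟨k, rfl⟩ : ∃ k', k = k' + 1 := Nat.exists_eq_add_one.mpr <|
        Nat.pos_of_ne_zero fun h => hk (by simp [h])
      have hrun' : ∀ j < k, a + 1 + j ∈ l := fun j hj => by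
        have := hrun (j + 1) (by omega)
        rcases List.mem_cons.mp this with h | h
        · omega
        · convert h using 1; omega
      have hk' : a + 1 + k ∉ l := fun h =>
        hk (List.mem_cons_of_mem _ (by convert h using 1; omega))
      rw [if_neg (by simp), ih hl.of_cons hlt hrun' hk']
      omega
    · have hk0 : k = 0 := by
        by_contra h
        rcases List.mem_cons.mp (hrun 0 (by omega)) with h' | h'
        · omega
        · exact absurd (hlt _ h') (by omega)
      subst hk0
      have hc1 : c + 1 + 0 ∉ l := fun h => absurd (hlt _ h) (by omega)
      rw [if_pos (by simp; omega), List.length_cons,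
        ih hl.of_cons (fun x hx => by have := hlt x hx; omega) (by simp) hc1]
      omega

namespace Finset

theorem exists_range_subset_notMem (s : Finset ℕ) : ∃ k, range k ⊆ s ∧ k ∉ s := by
  have h : ∃ k, k ∉ s := Infinite.exists_notMem_finset s
  refine ⟨Nat.find h, fun j hj => ?_, Nat.find_spec h⟩
  by_contra hjs
  exact absurd (Nat.find_min' h hjs) (by simpa using hj)

theorem card_phiMap {s : Finset ℕ} {k : ℕ} (hk : range k ⊆ s) (hks : k ∉ s) :
    Multiset.card (phiMap s) = s.card - k := by
  rw [phiMap, Multiset.coe_card, ← Finset.length_sort (· ≤ ·)]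
  exact List.length_filter_sub_zipIdx_ne_zero (Finset.sortedLT_sort s).pairwise
    (fun x _ => Nat.zero_le x) (fun j hj => by simpa using hk (mem_range.mpr hj))
    (by simpa using hks)

theorem subset_fillF (t : Finset ℕ) (A N : ℕ) : t ⊆ fillF t A N := subset_union_left

theorem card_fillF {t : Finset ℕ} {A N : ℕ} (ht : t ⊆ range N) (htA : t.card ≤ A)
    (hAN : A ≤ N) : (fillF t A N).card = A := by
  set M := (range N \ t).sort (· ≤ ·)
  have hMlen : M.length = N - t.card := by
    rw [Finset.length_sort, card_sdiff_of_subset ht, card_range]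
  have hdisj : Disjoint t (M.take (A - t.card)).toFinset := by
    rw [disjoint_right]
    intro x hx
    have := (mem_sort _).mp (List.mem_of_mem_take (List.mem_toFinset.mp hx))
    exact (mem_sdiff.mp this).2
  rw [fillF, card_union_of_disjoint hdisj,
    List.toFinset_card_of_nodup ((sort_nodup _ _).sublist (List.take_sublist _ _)),
    List.length_take, hMlen]
  omega

theorem lt_of_mem_fillF_sdiff {t : Finset ℕ} {A N x k : ℕ} (hx : x ∈ fillF t A N \ t)
    (hk : k ∉ fillF t A N) : x < k := by
  set M := (range N \ t).sort (· ≤ ·)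
  obtain ⟨hxF, hxt⟩ := mem_sdiff.mp hx
  have hxL : x ∈ M.take (A - t.card) :=
    List.mem_toFinset.mp ((mem_union.mp hxF).resolve_left hxt)
  have hxN : x < N := mem_range.mp (mem_sdiff.mp ((mem_sort _).mp (List.mem_of_mem_take hxL))).1
  by_cases hkN : k < N
  · have hkt : k ∉ t := fun h => hk (subset_fillF t A N h)
    refine (sortedLT_sort _).pairwise.rel_of_mem_take_of_notMem_take hxL
      ((mem_sort _).mpr (mem_sdiff.mpr ⟨mem_range.mpr hkN, hkt⟩)) fun h => hk ?_
    exact mem_union_right _ (List.mem_toFinset.mpr h)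
  · omega

theorem card_inter_range_add_eq {t : Finset ℕ} {A N k : ℕ} (ht : t ⊆ range N)
    (htA : t.card ≤ A) (hAN : A ≤ N) (hk : range k ⊆ fillF t A N) (hkF : k ∉ fillF t A N) :
    (t ∩ range k).card + (A - t.card) = k := by
  set F := fillF t A N
  have hcover : range k = (t ∩ range k) ∪ (F \ t) := by
    apply Subset.antisymm
    · intro x hx
      by_cases hxt : x ∈ t
      · exact mem_union_left _ (mem_inter.mpr ⟨hxt, hx⟩)
      · exact mem_union_right _ (mem_sdiff.mpr ⟨hk hx, hxt⟩)
    · exact union_subset inter_subset_right fun x hx =>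
        mem_range.mpr (lt_of_mem_fillF_sdiff hx hkF)
  have hdisj : Disjoint (t ∩ range k) (F \ t) :=
    disjoint_of_subset_left inter_subset_left disjoint_sdiff
  have := congrArg card hcover
  rw [card_range, card_union_of_disjoint hdisj, card_sdiff_of_subset (subset_fillF t A N),
    card_fillF ht htA hAN] at this
  omega

theorem card_inter_range_sub_card_phiMap_fillF {t : Finset ℕ} {A N : ℕ} (ht : t ⊆ range N)
    (htA : t.card ≤ A) (hAN : A ≤ N) :
    (t ∩ range (A - Multiset.card (phiMap (fillF t A N)))).card + (A - t.card)
      = A - Multiset.card (phiMap (fillF t A N)) := by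
  obtain ⟨k, hk, hkF⟩ := exists_range_subset_notMem (fillF t A N)
  have hkA : k ≤ A := by simpa [card_fillF ht htA hAN] using card_le_card hk
  rw [card_phiMap hk hkF, card_fillF ht htA hAN, Nat.sub_sub_self hkA]
  exact card_inter_range_add_eq ht htA hAN hk hkF

end Finset

theorem offF_add_le_offF (b : ℕ → ℕ) {i j : ℕ} (hij : i < j) : offF b i + b i ≤ offF b j := by
  rw [offF, ← sum_range_succ]
  exact sum_le_sum_of_subset (range_subset_range.mpr hij)

theorem card_globF (m : ℕ) (b : ℕ → ℕ) (τ : ℕ → Finset ℕ) :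
    (globF m b τ).card = ∑ i ∈ range m, (τ i ∩ range (b i)).card := by
  set blk := fun i => (τ i ∩ range (b i)).image (fun j => offF b i + j)
  have hdisj : ∀ i j, i < j → Disjoint (blk i) (blk j) := by
    intro i j hij
    rw [disjoint_left]
    rintro x hxi hxj
    obtain ⟨u, hu, rfl⟩ := mem_image.mp hxi
    obtain ⟨v, -, hvx⟩ := mem_image.mp hxj
    have hub : u < b i := mem_range.mp (mem_inter.mp hu).2
    have := offF_add_le_offF b hij
    omega
  rw [globF, card_biUnion]
  · exact sum_congr rfl fun i _ => card_image_of_injective _ (add_right_injective _)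
  · intro i _ j _ hij
    rcases Nat.lt_or_gt_of_ne hij with h | h
    · exact hdisj i j h
    · exact (hdisj j i h).symm

theorem stmt11_general (m d : ℕ) (n a : ℕ → ℕ)
    (ha : ∀ i, i < m → 0 < a i ∧ a i ≤ n i) :
    ∀ τ : ℕ → Finset ℕ, IsFacetT m d n a τ →
      (globF m (bfun a n τ) τ).card + ((∑ i ∈ Finset.range m, a i) - d)
        = ∑ i ∈ Finset.range m, bfun a n τ i := by
  rintro τ ⟨hsub, hcard, -, rfl⟩
  have hX₀ : (∑ i ∈ range m, a i) - ∑ i ∈ range m, (τ i).card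
      = ∑ i ∈ range m, (a i - (τ i).card) :=
    (sum_tsub_distrib _ fun i hi => hcard i (mem_range.mp hi)).symm
  rw [card_globF, hX₀, ← sum_add_distrib]
  refine sum_congr rfl fun i hi => ?_
  have him := mem_range.mp hi
  exact card_inter_range_sub_card_phiMap_fillF (hsub i him) (hcard i him) (ha i him).2

/-- Lemma `domain`: for every facet `τ` of `Λ_d`, `|V[τ]| - |τ ∩ V[τ]| = |X₀| = (∑ a) - d`,
so `τ ∩ V[τ]` lies in the domain of `φ(V[τ], X₀)`. -/
theorem stmt11 (m d : ℕ) (n a : ℕ → ℕ)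
    (hd1 : 1 ≤ d) (hd2 : d ≤ ∑ i ∈ Finset.range m, a i)
    (ha : ∀ i, i < m → 0 < a i ∧ a i ≤ n i) :
    ∀ τ : ℕ → Finset ℕ, IsFacetT m d n a τ →
      (globF m (bfun a n τ) τ).card + ((∑ i ∈ Finset.range m, a i) - d)
        = ∑ i ∈ Finset.range m, bfun a n τ i :=
  stmt11_general m d n a ha
end
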